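/- For a Banach lattice E, E has the property (d) if and only if every almost order bounded subset of E is almost limited. -/

import Mathlib

open Filter Topology Metric Pointwise

/-- The value `|f| x` of the modulus of a continuous linear functional at a positive
element `x`, given by the Riesz–Kantorovich formula `|f| x = sup { f u : |u| ≤ x }`. -/
noncomputable def absFunctional {E : Type*} [NormedAddCommGroup E] [Lattice E] [HasSolidNorm E] [IsOrderedAddMonoid E] [NormedSpace ℝ E]
    (f : E →L[ℝ] ℝ) (x : E) : ℝ :=
  sSup ((fun u => f u) '' {u : E | |u| ≤ x})

/-- Two functionals `f, g` on a Banach lattice are (lattice) disjoint: `|f| ⊓ |g| = 0`,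
expressed via the Riesz–Kantorovich formula for the infimum of the positive functionals
`|f|` and `|g|`. -/
def DualDisjoint {E : Type*} [NormedAddCommGroup E] [Lattice E] [HasSolidNorm E] [IsOrderedAddMonoid E] [NormedSpace ℝ E]
    (f g : E →L[ℝ] ℝ) : Prop :=
  ∀ x : E, 0 ≤ x → ∀ ε : ℝ, 0 < ε →
    ∃ y : E, 0 ≤ y ∧ y ≤ x ∧ absFunctional f y + absFunctional g (x - y) < ε

/-- A sequence of functionals is disjoint if any two distinct terms are lattice disjoint. -/
def DualDisjointSeq {E : Type*} [NormedAddCommGroup E] [Lattice E] [HasSolidNorm E] [IsOrderedAddMonoid E] [NormedSpace ℝ E]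
    (f : ℕ → E →L[ℝ] ℝ) : Prop :=
  ∀ m k, m ≠ k → DualDisjoint (f m) (f k)

/-- A sequence of functionals is weak* null if it converges to `0` pointwise. -/
def WeakStarNull {E : Type*} [NormedAddCommGroup E] [NormedSpace ℝ E]
    (f : ℕ → E →L[ℝ] ℝ) : Prop :=
  ∀ x : E, Tendsto (fun n => f n x) atTop (𝓝 (0 : ℝ))

/-- The sequence `(|f n|)` of moduli is weak* null (it suffices to test on positive
elements since `|f n|` is additive and every element is a difference of positives). -/
def AbsWeakStarNull {E : Type*} [NormedAddCommGroup E] [Lattice E] [HasSolidNorm E] [IsOrderedAddMonoid E] [NormedSpace ℝ E]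
    (f : ℕ → E →L[ℝ] ℝ) : Prop :=
  ∀ x : E, 0 ≤ x → Tendsto (fun n => absFunctional (f n) x) atTop (𝓝 (0 : ℝ))

/-- A functional is positive if it is nonnegative on the positive cone. -/
def PositiveFunctional {E : Type*} [NormedAddCommGroup E] [Lattice E] [HasSolidNorm E] [IsOrderedAddMonoid E] [NormedSpace ℝ E]
    (f : E →L[ℝ] ℝ) : Prop :=
  ∀ x : E, 0 ≤ x → 0 ≤ f x

/-- A norm bounded set `A` is almost limited if every disjoint weak* null sequence of
functionals converges to `0` uniformly on `A`. -/
def AlmostLimitedSet {E : Type*} [NormedAddCommGroup E] [Lattice E] [HasSolidNorm E] [IsOrderedAddMonoid E] [NormedSpace ℝ E]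
    (A : Set E) : Prop :=
  Bornology.IsBounded A ∧
    ∀ f : ℕ → E →L[ℝ] ℝ, DualDisjointSeq f → WeakStarNull f →
      TendstoUniformlyOn (fun n x => f n x) (fun _ => (0 : ℝ)) atTop A

/-- A norm bounded set `A` in a Banach space is limited if every weak* null sequence of
functionals converges to `0` uniformly on `A`. -/
def LimitedSet {X : Type*} [NormedAddCommGroup X] [NormedSpace ℝ X] (A : Set X) : Prop :=
  Bornology.IsBounded A ∧
    ∀ f : ℕ → X →L[ℝ] ℝ, WeakStarNull f →
      TendstoUniformlyOn (fun n x => f n x) (fun _ => (0 : ℝ)) atTop A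

/-- Property (d): for every disjoint weak* null sequence `(f n)`, `(|f n|)` is weak* null. -/
def PropertyD (E : Type*) [NormedAddCommGroup E] [Lattice E] [HasSolidNorm E] [IsOrderedAddMonoid E] [NormedSpace ℝ E] : Prop :=
  ∀ f : ℕ → E →L[ℝ] ℝ, DualDisjointSeq f → WeakStarNull f → AbsWeakStarNull f

/-- The lattice operations of the dual are weak* sequentially continuous: for every
weak* null sequence `(f n)`, `(|f n|)` is weak* null. -/
def DualLatticeWeakStarSeqCont (E : Type*) [NormedAddCommGroup E] [Lattice E] [HasSolidNorm E] [IsOrderedAddMonoid E]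
    [NormedSpace ℝ E] : Prop :=
  ∀ f : ℕ → E →L[ℝ] ℝ, WeakStarNull f → AbsWeakStarNull f

/-- A sequence in a Banach lattice is disjoint if the moduli of distinct terms meet at 0. -/
def LatticeDisjointSeq {E : Type*} [NormedAddCommGroup E] [Lattice E] [HasSolidNorm E] [IsOrderedAddMonoid E] (x : ℕ → E) : Prop :=
  ∀ m k, m ≠ k → |x m| ⊓ |x k| = 0

/-- A sequence is weakly null if `f (x n) → 0` for every continuous linear functional. -/
def WeaklyNull {E : Type*} [NormedAddCommGroup E] [NormedSpace ℝ E] (x : ℕ → E) : Prop :=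
  ∀ f : E →L[ℝ] ℝ, Tendsto (fun n => f (x n)) atTop (𝓝 (0 : ℝ))

/-- A set is solid if `x ∈ A` and `|y| ≤ |x|` imply `y ∈ A`. -/
def IsSolid {E : Type*} [NormedAddCommGroup E] [Lattice E] [HasSolidNorm E] [IsOrderedAddMonoid E] (A : Set E) : Prop :=
  ∀ x ∈ A, ∀ y : E, |y| ≤ |x| → y ∈ A

/-- The solid hull of a set. -/
def solidHull {E : Type*} [NormedAddCommGroup E] [Lattice E] [HasSolidNorm E] [IsOrderedAddMonoid E] (A : Set E) : Set E :=
  {y | ∃ x ∈ A, |y| ≤ |x|}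

/-- A set is almost order bounded if for every `ε > 0` it is contained in
`[-u, u] + ε B_E` for some positive `u`. -/
def AlmostOrderBounded {E : Type*} [NormedAddCommGroup E] [Lattice E] [HasSolidNorm E] [IsOrderedAddMonoid E] (A : Set E) : Prop :=
  ∀ ε : ℝ, 0 < ε → ∃ u : E, 0 ≤ u ∧ A ⊆ Set.Icc (-u) u + Metric.closedBall (0 : E) ε

/-- σ-Dedekind completeness: every countable nonempty set bounded above has a supremum. -/
def SigmaDedekindComplete (E : Type*) [NormedAddCommGroup E] [Lattice E] [HasSolidNorm E] [IsOrderedAddMonoid E] : Prop :=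
  ∀ s : Set E, s.Countable → s.Nonempty → BddAbove s → ∃ b : E, IsLUB s b

/-- A set is relatively weakly compact if its closure in the weak topology is compact. -/
def RelativelyWeaklyCompact {E : Type*} [NormedAddCommGroup E] [NormedSpace ℝ E]
    (A : Set E) : Prop :=
  IsCompact (closure ((toWeakSpace ℝ E) '' A))

/-- The weak Dunford–Pettis* property: every relatively weakly compact set is almost limited. -/
def WDPStar (E : Type*) [NormedAddCommGroup E] [Lattice E] [HasSolidNorm E] [IsOrderedAddMonoid E] [NormedSpace ℝ E] : Prop :=
  ∀ A : Set E, RelativelyWeaklyCompact A → AlmostLimitedSet A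

/-- The bi-sequence property: for each disjoint weakly null sequence in the positive cone
and each weak* null sequence of positive functionals, `f n (x n) → 0`. -/
def BiSequenceProperty (E : Type*) [NormedAddCommGroup E] [Lattice E] [HasSolidNorm E] [IsOrderedAddMonoid E] [NormedSpace ℝ E] : Prop :=
  ∀ x : ℕ → E, (∀ n, 0 ≤ x n) → LatticeDisjointSeq x → WeaklyNull x →
    ∀ f : ℕ → E →L[ℝ] ℝ, (∀ n, PositiveFunctional (f n)) → WeakStarNull f →
      Tendsto (fun n => f n (x n)) atTop (𝓝 (0 : ℝ))

/-- The dual Schur property: every disjoint weak* null sequence of functionals is norm null. -/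
def DualSchur (E : Type*) [NormedAddCommGroup E] [Lattice E] [HasSolidNorm E] [IsOrderedAddMonoid E] [NormedSpace ℝ E] : Prop :=
  ∀ f : ℕ → E →L[ℝ] ℝ, DualDisjointSeq f → WeakStarNull f →
    Tendsto (fun n => ‖f n‖) atTop (𝓝 (0 : ℝ))

/-- The dual positive Schur property: every weak* null sequence of positive functionals
is norm null. -/
def DualPositiveSchur (E : Type*) [NormedAddCommGroup E] [Lattice E] [HasSolidNorm E] [IsOrderedAddMonoid E] [NormedSpace ℝ E] : Prop :=
  ∀ f : ℕ → E →L[ℝ] ℝ, (∀ n, PositiveFunctional (f n)) → WeakStarNull f →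
    Tendsto (fun n => ‖f n‖) atTop (𝓝 (0 : ℝ))

/-- The norm of a Banach lattice is order continuous: every net decreasing to `0`
converges to `0` in norm. -/
def OrderContinuousNorm (E : Type*) [NormedAddCommGroup E] [Lattice E] [HasSolidNorm E] [IsOrderedAddMonoid E] : Prop :=
  ∀ {ι : Type*} [Preorder ι] [IsDirected ι (· ≤ ·)] [Nonempty ι] (x : ι → E),
    Antitone x → IsGLB (Set.range x) 0 → Tendsto (fun i => ‖x i‖) atTop (𝓝 (0 : ℝ))

/-- The norm of the dual Banach lattice is order continuous: every net of functionals
decreasing to `0` (in the dual order, i.e., pointwise on the positive cone, with greatest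
lower bound `0`) converges to `0` in norm. -/
def DualOrderContinuousNorm (E : Type*) [NormedAddCommGroup E] [Lattice E] [HasSolidNorm E] [IsOrderedAddMonoid E]
    [NormedSpace ℝ E] : Prop :=
  ∀ {ι : Type*} [Preorder ι] [IsDirected ι (· ≤ ·)] [Nonempty ι] (f : ι → E →L[ℝ] ℝ),
    (∀ i j, i ≤ j → ∀ x : E, 0 ≤ x → f j x ≤ f i x) →
    (∀ i, PositiveFunctional (f i)) →
    (∀ g : E →L[ℝ] ℝ, (∀ i, ∀ x : E, 0 ≤ x → g x ≤ f i x) → ∀ x : E, 0 ≤ x → g x ≤ 0) →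
    Tendsto (fun i => ‖f i‖) atTop (𝓝 (0 : ℝ))

/-- A norm bounded set `A` is L-weakly compact if every disjoint sequence in its solid
hull is norm null. -/
def LWeaklyCompactSet {E : Type*} [NormedAddCommGroup E] [Lattice E] [HasSolidNorm E] [IsOrderedAddMonoid E] (A : Set E) : Prop :=
  Bornology.IsBounded A ∧
    ∀ y : ℕ → E, (∀ n, y n ∈ solidHull A) → LatticeDisjointSeq y →
      Tendsto (fun n => ‖y n‖) atTop (𝓝 (0 : ℝ))

/-- An atom of a Banach lattice. -/
def IsLatticeAtom {E : Type*} [NormedAddCommGroup E] [Lattice E] [HasSolidNorm E] [IsOrderedAddMonoid E] (a : E) : Prop :=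
  0 < a ∧ ∀ x y : E, 0 ≤ x → x ≤ a → 0 ≤ y → y ≤ a → x ⊓ y = 0 → x = 0 ∨ y = 0

/-- A Banach lattice is discrete (atomic) if the band generated by its atoms is the whole
lattice; equivalently, the only element disjoint from all atoms is `0`. -/
def DiscreteBanachLattice (E : Type*) [NormedAddCommGroup E] [Lattice E] [HasSolidNorm E] [IsOrderedAddMonoid E] : Prop :=
  ∀ x : E, (∀ a : E, IsLatticeAtom a → |x| ⊓ a = 0) → x = 0

/-- A linear operator between Banach lattices is order bounded if it maps order intervals
into order intervals. -/
def OrderBoundedOperator {E F : Type*} [NormedAddCommGroup E] [Lattice E] [HasSolidNorm E] [IsOrderedAddMonoid E] [NormedSpace ℝ E]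
    [NormedAddCommGroup F] [Lattice F] [HasSolidNorm F] [IsOrderedAddMonoid F] [NormedSpace ℝ F] (T : E →ₗ[ℝ] F) : Prop :=
  ∀ a b : E, ∃ c d : F, T '' Set.Icc a b ⊆ Set.Icc c d

/-!
On an order interval `[-u, u]` the supremum of `|f x|` is `|f| u`, and an almost order bounded
set lies in `[-u, u]` up to a perturbation of small norm. Since a weak* null sequence is norm
bounded (Banach–Steinhaus), property (d) therefore makes a disjoint weak* null sequence converge
uniformly on almost order bounded sets. Conversely, order intervals are almost order bounded, and
uniform convergence to `0` on `[-x, x]` is exactly `|f n| x → 0`.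
-/

lemma abs_le_iff_mem_Icc_neg {G : Type*} [AddCommGroup G] [Lattice G] [IsOrderedAddMonoid G]
    {x u : G} : |x| ≤ u ↔ x ∈ Set.Icc (-u) u := by
  rw [abs_le', Set.mem_Icc, neg_le, and_comm]

lemma norm_le_of_abs_le {E : Type*} [NormedAddCommGroup E] [Lattice E] [HasSolidNorm E]
    {x u : E} (h : |x| ≤ u) : ‖x‖ ≤ ‖u‖ :=
  HasSolidNorm.solid (h.trans (le_abs_self u))

section NormedLattice

variable {E : Type*} [NormedAddCommGroup E] [Lattice E] [HasSolidNorm E] [IsOrderedAddMonoid E]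

lemma isBounded_Icc_neg (u : E) : Bornology.IsBounded (Set.Icc (-u) u) :=
  (isBounded_closedBall (x := 0) (r := ‖u‖)).subset fun _ hx =>
    mem_closedBall_zero_iff.mpr (norm_le_of_abs_le (abs_le_iff_mem_Icc_neg.mpr hx))

lemma AlmostOrderBounded.isBounded {A : Set E} (hA : AlmostOrderBounded A) :
    Bornology.IsBounded A := by
  obtain ⟨u, -, hsub⟩ := hA 1 one_pos
  exact ((isBounded_Icc_neg u).add isBounded_closedBall).subset hsub

lemma almostOrderBounded_Icc_neg {u : E} (hu : 0 ≤ u) : AlmostOrderBounded (Set.Icc (-u) u) :=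
  fun _ hε => ⟨u, hu, Set.subset_add_left _ (mem_closedBall_self hε.le)⟩

end NormedLattice

lemma WeakStarNull.exists_norm_le {E : Type*} [NormedAddCommGroup E] [NormedSpace ℝ E]
    [CompleteSpace E] {f : ℕ → E →L[ℝ] ℝ} (hf : WeakStarNull f) : ∃ C, ∀ n, ‖f n‖ ≤ C :=
  banach_steinhaus fun x => by
    obtain ⟨C, hC⟩ := (hf x).norm.bddAbove_range
    exact ⟨C, fun n => hC (Set.mem_range_self n)⟩

lemma bddAbove_image_abs_le {E : Type*} [NormedAddCommGroup E] [Lattice E] [HasSolidNorm E]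
    [NormedSpace ℝ E] (f : E →L[ℝ] ℝ) (x : E) :
    BddAbove ((fun u => f u) '' {u : E | |u| ≤ x}) := by
  refine ⟨‖f‖ * ‖x‖, ?_⟩
  rintro _ ⟨u, hu, rfl⟩
  calc f u ≤ ‖f u‖ := le_abs_self _
    _ ≤ ‖f‖ * ‖u‖ := f.le_opNorm u
    _ ≤ ‖f‖ * ‖x‖ := by gcongr; exact norm_le_of_abs_le hu

section AbsFunctional

variable {E : Type*} [NormedAddCommGroup E] [Lattice E] [HasSolidNorm E] [IsOrderedAddMonoid E]
  [NormedSpace ℝ E] (f : E →L[ℝ] ℝ)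

lemma abs_apply_le_absFunctional {x u : E} (h : |x| ≤ u) : |f x| ≤ absFunctional f u := by
  have hbdd := bddAbove_image_abs_le f u
  refine abs_le.mpr ⟨?_, le_csSup hbdd ⟨x, h, rfl⟩⟩
  have : f (-x) ≤ absFunctional f u := le_csSup hbdd ⟨-x, by simpa using h, rfl⟩
  rw [map_neg] at this
  linarith

lemma absFunctional_nonneg {x : E} (hx : 0 ≤ x) : 0 ≤ absFunctional f x := by
  simpa using abs_apply_le_absFunctional f (x := 0) (by simpa using hx)

lemma absFunctional_le {x : E} (hx : 0 ≤ x) {c : ℝ} (h : ∀ u, |u| ≤ x → f u ≤ c) :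
    absFunctional f x ≤ c :=
  csSup_le ⟨_, 0, by simpa using hx, rfl⟩ (by rintro _ ⟨u, hu, rfl⟩; exact h u hu)

lemma abs_apply_le_of_mem_Icc_add_closedBall {u x : E} {δ : ℝ}
    (hx : x ∈ Set.Icc (-u) u + closedBall (0 : E) δ) :
    |f x| ≤ absFunctional f u + ‖f‖ * δ := by
  obtain ⟨y, hy, z, hz, rfl⟩ := hx
  calc |f (y + z)| ≤ |f y| + ‖f z‖ := by rw [map_add]; exact abs_add_le _ _
    _ ≤ absFunctional f u + ‖f‖ * δ := by
      gcongr
      · exact abs_apply_le_absFunctional f (abs_le_iff_mem_Icc_neg.mpr hy)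
      · exact f.le_of_opNorm_le_of_le le_rfl (mem_closedBall_zero_iff.mp hz)

variable {f : ℕ → E →L[ℝ] ℝ}

lemma tendstoUniformlyOn_zero_of_absWeakStarNull {C : ℝ} (hC : ∀ n, ‖f n‖ ≤ C)
    (hf : AbsWeakStarNull f) {A : Set E} (hA : AlmostOrderBounded A) :
    TendstoUniformlyOn (fun n x => f n x) (fun _ => (0 : ℝ)) atTop A := by
  rw [Metric.tendstoUniformlyOn_iff]
  intro ε hε
  have hC0 : 0 ≤ C := (norm_nonneg _).trans (hC 0)
  set δ := ε / (2 * (C + 1))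
  have hδ : 0 < δ := by positivity
  have hCδ : C * δ < ε / 2 :=
    calc C * δ < (C + 1) * δ := by gcongr; linarith
      _ = ε / 2 := by simp only [δ]; field_simp
  obtain ⟨u, hu, hsub⟩ := hA δ hδ
  filter_upwards [(hf u hu).eventually (gt_mem_nhds (half_pos hε))] with n hn x hx
  rw [dist_zero_left, Real.norm_eq_abs]
  calc |f n x| ≤ absFunctional (f n) u + ‖f n‖ * δ :=
        abs_apply_le_of_mem_Icc_add_closedBall (f n) (hsub hx)
    _ ≤ absFunctional (f n) u + C * δ := by gcongr; exact hC n
    _ < ε / 2 + ε / 2 := add_lt_add hn hCδ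
    _ = ε := add_halves ε

lemma tendsto_absFunctional_of_tendstoUniformlyOn_Icc {x : E} (hx : 0 ≤ x)
    (hf : TendstoUniformlyOn (fun n y => f n y) (fun _ => (0 : ℝ)) atTop (Set.Icc (-x) x)) :
    Tendsto (fun n => absFunctional (f n) x) atTop (𝓝 0) := by
  rw [Metric.tendsto_nhds]
  intro ε hε
  filter_upwards [Metric.tendstoUniformlyOn_iff.mp hf (ε / 2) (half_pos hε)] with n hn
  rw [Real.dist_eq, sub_zero, abs_of_nonneg (absFunctional_nonneg (f n) hx)]
  refine (absFunctional_le (f n) hx fun u hu => ?_).trans_lt (half_lt_self hε)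
  have := hn u (abs_le_iff_mem_Icc_neg.mp hu)
  rw [dist_zero_left, Real.norm_eq_abs] at this
  exact (le_abs_self _).trans this.le

end AbsFunctional

/-- `E` has property (d) iff every almost order bounded subset of `E` is
almost limited. -/
theorem statement5 {E : Type*} [NormedAddCommGroup E] [Lattice E] [HasSolidNorm E] [IsOrderedAddMonoid E] [NormedSpace ℝ E]
    [CompleteSpace E] :
    PropertyD E ↔ ∀ A : Set E, AlmostOrderBounded A → AlmostLimitedSet A := by
  constructor
  · intro hd A hA
    refine ⟨hA.isBounded, fun f hdisj hnull => ?_⟩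
    obtain ⟨C, hC⟩ := hnull.exists_norm_le
    exact tendstoUniformlyOn_zero_of_absWeakStarNull hC (hd f hdisj hnull) hA
  · intro h f hdisj hnull x hx
    exact tendsto_absFunctional_of_tendstoUniformlyOn_Icc hx
      ((h _ (almostOrderBounded_Icc_neg hx)).2 f hdisj hnull)
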